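/- Let λ_f, λ_0 ≥ 1, v ∈ S² ⊂ ℝ³, v₀ ∈ S¹ ⊂ ℝ², F ∈ ℝ^{3×3}, Q ∈ SO(3), σ ∈ {−1,1}. If v = σ Q (v₀, 0) and (ℓ_v^f)^{−1/2} F (ℓ_{v₀}^0)^{1/2} = Q, then: (i) v = σ [F]_{3×2} v₀ / |[F]_{3×2} v₀|; (ii) [FᵀF]_{2×2} = g_{v₀} := λ_0^{−1}λ_f v₀⊗v₀ + λ_f^{−1/2}λ_0^{1/2} v₀^⊥⊗v₀^⊥; and (iii) F e₃ = λ_0^{1/4} λ_f^{−1/4} (F e₁ × F e₂)/|F e₁ × F e₂|. -/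
import Mathlib

open Matrix

/-- Embedding of a planar vector into ℝ³ with zero third component. -/
def emb (v₀ : Fin 2 → ℝ) : Fin 3 → ℝ := ![v₀ 0, v₀ 1, 0]

/-- Rotation of a planar vector by π/2. -/
def perp (v₀ : Fin 2 → ℝ) : Fin 2 → ℝ := ![-v₀ 1, v₀ 0]

/-- `(ℓ_v^f)^{-1/2} = λf^{-1/2} v⊗v + λf^{1/4}(I − v⊗v)`. -/
noncomputable def invSqrtStepF (lf : ℝ) (v : Fin 3 → ℝ) : Matrix (Fin 3) (Fin 3) ℝ :=
  lf ^ (-(1 : ℝ) / 2) • vecMulVec v v + lf ^ ((1 : ℝ) / 4) • (1 - vecMulVec v v)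

/-- `(ℓ_{v₀}^0)^{1/2} = λ0^{1/2} (v₀,0)⊗(v₀,0) + λ0^{-1/4}(I − (v₀,0)⊗(v₀,0))`. -/
noncomputable def sqrtStep0 (l0 : ℝ) (v₀ : Fin 2 → ℝ) : Matrix (Fin 3) (Fin 3) ℝ :=
  l0 ^ ((1 : ℝ) / 2) • vecMulVec (emb v₀) (emb v₀)
    + l0 ^ (-(1 : ℝ) / 4) • (1 - vecMulVec (emb v₀) (emb v₀))

/-- The target metric `g_{v₀} = λ0⁻¹λf v₀⊗v₀ + λf^{-1/2}λ0^{1/2} v₀^⊥⊗v₀^⊥`. -/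
noncomputable def gMetric (lf l0 : ℝ) (v₀ : Fin 2 → ℝ) : Matrix (Fin 2) (Fin 2) ℝ :=
  (l0⁻¹ * lf) • vecMulVec v₀ v₀
    + (lf ^ (-(1 : ℝ) / 2) * l0 ^ ((1 : ℝ) / 2)) • vecMulVec (perp v₀) (perp v₀)

/-- `[F]_{3×2} v₀`, the first two columns of `F` applied to `v₀`. -/
def cols2mul (F : Matrix (Fin 3) (Fin 3) ℝ) (v₀ : Fin 2 → ℝ) : Fin 3 → ℝ :=
  fun i => F i 0 * v₀ 0 + F i 1 * v₀ 1

/-- Principal 2×2 submatrix of a 3×3 matrix. -/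
def sub22 (M : Matrix (Fin 3) (Fin 3) ℝ) : Matrix (Fin 2) (Fin 2) ℝ :=
  Matrix.of ![![M 0 0, M 0 1], ![M 1 0, M 1 1]]

/-- Euclidean norm of a vector in ℝ³. -/
noncomputable def nrm3 (w : Fin 3 → ℝ) : ℝ := Real.sqrt (w ⬝ᵥ w)

/-- The special orthogonal group SO(3). -/
def SO3 : Set (Matrix (Fin 3) (Fin 3) ℝ) := {Q | Qᵀ * Q = 1 ∧ Q.det = 1}

lemma vmv_mul (u w x y : Fin 3 → ℝ) :
    vecMulVec u w * vecMulVec x y = (w ⬝ᵥ x) • vecMulVec u y := by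
  ext i j
  simp [mul_apply, vecMulVec_apply, dotProduct, Fin.sum_univ_three]
  ring

lemma vmv_mulVec (u w x : Fin 3 → ℝ) :
    (vecMulVec u w).mulVec x = (w ⬝ᵥ x) • u := by
  funext i
  simp [mulVec, vecMulVec_apply, dotProduct, Fin.sum_univ_three]
  ring

lemma mix_mul (E : Matrix (Fin 3) (Fin 3) ℝ) (hE : E * E = E) (x y z w : ℝ) :
    (x • E + y • (1 - E)) * (z • E + w • (1 - E))
      = (x * z) • E + (y * w) • (1 - E) := by
  have h1 : E * (1 - E) = 0 := by rw [mul_sub, mul_one, hE, sub_self]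
  have h2 : (1 - E) * E = 0 := by rw [sub_mul, one_mul, hE, sub_self]
  have h3 : (1 - E) * (1 - E) = 1 - E := by
    rw [sub_mul, one_mul, mul_sub, mul_one, hE]; abel
  rw [add_mul, mul_add, mul_add, smul_mul_smul_comm, smul_mul_smul_comm,
    smul_mul_smul_comm, smul_mul_smul_comm, hE, h1, h2, h3, smul_zero, smul_zero,
    add_zero, zero_add]

lemma cross_adj (M : Matrix (Fin 3) (Fin 3) ℝ) (a b : Fin 3 → ℝ) :
    crossProduct (M.mulVec a) (M.mulVec b) = (Mᵀ).adjugate.mulVec (crossProduct a b) := by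
  funext i
  fin_cases i <;>
    simp [cross_apply, mulVec, dotProduct, Fin.sum_univ_three, adjugate_fin_three,
      transpose_apply] <;> ring

/-- If `v = σ Q (v₀,0)` and `(ℓ_v^f)^{-1/2} F (ℓ_{v₀}^0)^{1/2} = Q ∈ SO(3)`, then
(i) `v = σ [F]_{3×2}v₀ / |[F]_{3×2}v₀|`, (ii) `[FᵀF]_{2×2} = g_{v₀}`, and
(iii) `F e₃ = λ0^{1/4} λf^{-1/4} (F e₁ × F e₂)/|F e₁ × F e₂|`. -/
theorem stepLength_rotation_implies_metric (lf l0 : ℝ) (hlf : 1 ≤ lf) (hl0 : 1 ≤ l0)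
    (v : Fin 3 → ℝ) (hv : v ⬝ᵥ v = 1) (v₀ : Fin 2 → ℝ) (hv₀ : v₀ ⬝ᵥ v₀ = 1)
    (F Q : Matrix (Fin 3) (Fin 3) ℝ) (hQ : Q ∈ SO3)
    (σ : ℝ) (hσ : σ = 1 ∨ σ = -1)
    (h1 : v = σ • Q.mulVec (emb v₀))
    (h2 : invSqrtStepF lf v * F * sqrtStep0 l0 v₀ = Q) :
    v = (σ / nrm3 (cols2mul F v₀)) • cols2mul F v₀ ∧
    sub22 (Fᵀ * F) = gMetric lf l0 v₀ ∧
    (fun i => F i 2)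
      = (l0 ^ ((1 : ℝ) / 4) * lf ^ (-(1 : ℝ) / 4)
          / nrm3 (crossProduct (fun i => F i 0) (fun i => F i 1)))
        • (crossProduct (fun i => F i 0) (fun i => F i 1)) := by
  obtain ⟨hQ1, hQdet⟩ := hQ
  have hlf0 : (0:ℝ) < lf := lt_of_lt_of_le one_pos hlf
  have hl00 : (0:ℝ) < l0 := lt_of_lt_of_le one_pos hl0
  have rpf : ∀ p q : ℝ, lf ^ p * lf ^ q = lf ^ (p + q) :=
    fun p q => (Real.rpow_add hlf0 p q).symm
  have rp0 : ∀ p q : ℝ, l0 ^ p * l0 ^ q = l0 ^ (p + q) :=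
    fun p q => (Real.rpow_add hl00 p q).symm
  set e : Fin 3 → ℝ := emb v₀ with he
  have he0 : e 0 = v₀ 0 := rfl
  have he1 : e 1 = v₀ 1 := rfl
  have he2 : e 2 = 0 := rfl
  have hv₀' : v₀ 0 * v₀ 0 + v₀ 1 * v₀ 1 = 1 := by
    simpa [dotProduct, Fin.sum_univ_two] using hv₀
  have hee : e ⬝ᵥ e = 1 := by
    simp [dotProduct, Fin.sum_univ_three, he0, he1, he2]
    linarith [hv₀']
  set E := vecMulVec e e with hEdef
  set P := vecMulVec v v with hPdef
  have hEE : E * E = E := by rw [hEdef, vmv_mul, hee, one_smul]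
  have hPP : P * P = P := by rw [hPdef, vmv_mul, hv, one_smul]
  have hσ2 : σ * σ = 1 := by rcases hσ with h | h <;> rw [h] <;> norm_num
  have hQe : Q.mulVec e = σ • v := by
    rw [h1, smul_smul, hσ2, one_smul]
  have hvQ : Qᵀ.mulVec v = σ • e := by
    rw [h1, mulVec_smul, mulVec_mulVec, hQ1, one_mulVec]
  have hPQ : P * Q = Q * E := by
    ext i j
    have h1' := congrFun hvQ j
    have h2' := congrFun hQe i
    simp [mulVec, dotProduct, Fin.sum_univ_three, transpose_apply] at h1' h2'
    simp [hPdef, hEdef, mul_apply, vecMulVec_apply, Fin.sum_univ_three]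
    linear_combination v i * h1' - e j * h2'
  set α1 : ℝ := lf ^ ((1:ℝ)/2) * l0 ^ (-(1:ℝ)/2) with hα1
  set β1 : ℝ := lf ^ (-(1:ℝ)/4) * l0 ^ ((1:ℝ)/4) with hβ1
  have hα1pos : 0 < α1 := mul_pos (Real.rpow_pos_of_pos hlf0 _) (Real.rpow_pos_of_pos hl00 _)
  have hβ1pos : 0 < β1 := mul_pos (Real.rpow_pos_of_pos hlf0 _) (Real.rpow_pos_of_pos hl00 _)
  set A' : Matrix (Fin 3) (Fin 3) ℝ :=
    lf ^ ((1:ℝ)/2) • P + lf ^ (-(1:ℝ)/4) • (1 - P) with hA'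
  set B' : Matrix (Fin 3) (Fin 3) ℝ :=
    l0 ^ (-(1:ℝ)/2) • E + l0 ^ ((1:ℝ)/4) • (1 - E) with hB'
  have hAeq : invSqrtStepF lf v = lf ^ (-(1:ℝ)/2) • P + lf ^ ((1:ℝ)/4) • (1 - P) := by
    rw [hPdef]; rfl
  have hBeq : sqrtStep0 l0 v₀ = l0 ^ ((1:ℝ)/2) • E + l0 ^ (-(1:ℝ)/4) • (1 - E) := by
    rw [hEdef, he]; rfl
  have hA'A : A' * invSqrtStepF lf v = 1 := by
    rw [hAeq, hA', mix_mul P hPP, rpf, rpf]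
    norm_num
  have hBB' : sqrtStep0 l0 v₀ * B' = 1 := by
    rw [hBeq, hB', mix_mul E hEE, rp0, rp0]
    norm_num
  have hFeq : F = A' * Q * B' := by
    have h3 : A' * (invSqrtStepF lf v * F * sqrtStep0 l0 v₀) * B' = A' * Q * B' := by rw [h2]
    calc F = 1 * F * 1 := by rw [one_mul, mul_one]
      _ = (A' * invSqrtStepF lf v) * F * (sqrtStep0 l0 v₀ * B') := by rw [hA'A, hBB']
      _ = A' * (invSqrtStepF lf v * F * sqrtStep0 l0 v₀) * B' := by
          simp only [mul_assoc]
      _ = A' * Q * B' := h3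
  set M : Matrix (Fin 3) (Fin 3) ℝ := α1 • E + β1 • (1 - E) with hM
  have hA'Q : A' * Q = Q * (lf ^ ((1:ℝ)/2) • E + lf ^ (-(1:ℝ)/4) • (1 - E)) := by
    simp only [hA', add_mul, smul_mul_assoc, sub_mul, one_mul, hPQ, mul_add,
      mul_smul_comm, mul_sub, mul_one]
  have hFQM : F = Q * M := by
    rw [hFeq, hA'Q, mul_assoc, hB', mix_mul E hEE, hM, hα1, hβ1]
  have hET : Eᵀ = E := by
    ext i j; simp [hEdef, vecMulVec_apply, transpose_apply]; ring
  have hMT : Mᵀ = M := by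
    rw [hM]
    simp [transpose_add, transpose_smul, transpose_sub, transpose_one, hET]
  have hαα : α1 * α1 = l0⁻¹ * lf := by
    rw [hα1, mul_mul_mul_comm, rpf, rp0]
    norm_num
    rw [Real.rpow_neg_one]
    ring
  have hββ : β1 * β1 = lf ^ (-(1:ℝ)/2) * l0 ^ ((1:ℝ)/2) := by
    rw [hβ1, mul_mul_mul_comm, rpf, rp0]
    norm_num
  have hFtF : Fᵀ * F = (α1 * α1) • E + (β1 * β1) • (1 - E) := by
    calc Fᵀ * F = (Mᵀ * Qᵀ) * (Q * M) := by rw [hFQM, transpose_mul]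
      _ = Mᵀ * ((Qᵀ * Q) * M) := by simp only [mul_assoc]
      _ = M * M := by rw [hQ1, one_mul, hMT]
      _ = (α1 * α1) • E + (β1 * β1) • (1 - E) := by rw [hM, mix_mul E hEE]
  -- part (i)
  have hMe : M.mulVec e = α1 • e := by
    rw [hM, add_mulVec, smul_mulVec, smul_mulVec, sub_mulVec, one_mulVec,
      hEdef, vmv_mulVec, hee, one_smul, sub_self, smul_zero, add_zero]
  have hcols : cols2mul F v₀ = F.mulVec e := by
    funext i
    simp [cols2mul, mulVec, dotProduct, Fin.sum_univ_three, he0, he1, he2]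
  have hFe : F.mulVec e = (α1 * σ) • v := by
    rw [hFQM, ← mulVec_mulVec, hMe, mulVec_smul, hQe, smul_smul]
  have hnrm : nrm3 (cols2mul F v₀) = α1 := by
    rw [hcols, hFe, nrm3]
    have hd : ((α1 * σ) • v) ⬝ᵥ ((α1 * σ) • v) = α1 ^ 2 := by
      rw [smul_dotProduct, dotProduct_smul, hv, smul_eq_mul, smul_eq_mul, mul_one]
      rcases hσ with h | h <;> rw [h] <;> ring
    rw [hd, Real.sqrt_sq hα1pos.le]
  refine ⟨?_, ?_, ?_⟩
  · rw [hnrm, hcols, hFe, smul_smul]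
    have hc : σ / α1 * (α1 * σ) = 1 := by
      rcases hσ with h | h <;> rw [h] <;> field_simp
    rw [hc, one_smul]
  · -- part (ii)
    have hββ2 : β1 * β1 = lf ^ (-(1:ℝ)/2) * l0 ^ ((2:ℝ)⁻¹) := by
      rw [hββ]; norm_num
    ext i j
    fin_cases i <;> fin_cases j <;>
      simp [sub22, gMetric, hFtF, hEdef, vecMulVec_apply, perp, emb,
        Matrix.one_apply, smul_eq_mul, he0, he1, he2]
    · linear_combination (v₀ 0 * v₀ 0) * hαα + (v₀ 1 * v₀ 1) * hββ2 - (β1 * β1) * hv₀'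
    · linear_combination (v₀ 0 * v₀ 1) * hαα - (v₀ 0 * v₀ 1) * hββ2
    · linear_combination (v₀ 0 * v₀ 1) * hαα - (v₀ 0 * v₀ 1) * hββ2
    · linear_combination (v₀ 1 * v₀ 1) * hαα + (v₀ 0 * v₀ 0) * hββ2 - (β1 * β1) * hv₀'
  · -- part (iii)
    have hcol2 : (fun i => F i 2) = F.mulVec ![0,0,1] := by
      funext i; simp [mulVec, dotProduct, Fin.sum_univ_three]
    have hcol0 : (fun i => F i 0) = F.mulVec ![(1:ℝ),0,0] := by
      funext i; simp [mulVec, dotProduct, Fin.sum_univ_three]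
    have hcol1 : (fun i => F i 1) = F.mulVec ![(0:ℝ),1,0] := by
      funext i; simp [mulVec, dotProduct, Fin.sum_univ_three]
    have hMe3 : M.mulVec ![0,0,1] = β1 • ![0,0,1] := by
      have h0 : e ⬝ᵥ ![0,0,1] = 0 := by
        simp [dotProduct, Fin.sum_univ_three, he2]
      rw [hM, add_mulVec, smul_mulVec, smul_mulVec, sub_mulVec, one_mulVec,
        hEdef, vmv_mulVec, h0, zero_smul, smul_zero, sub_zero, zero_add]
    have hFe3 : F.mulVec ![0,0,1] = β1 • Q.mulVec ![0,0,1] := by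
      rw [hFQM, ← mulVec_mulVec, hMe3, mulVec_smul]
    have hadj : Qᵀ.adjugate = Q := by
      have hQa : Q * Q.adjugate = 1 := by rw [mul_adjugate, hQdet, one_smul]
      have hQadj : Q.adjugate = Qᵀ := by
        calc Q.adjugate = 1 * Q.adjugate := (one_mul _).symm
          _ = (Qᵀ * Q) * Q.adjugate := by rw [hQ1]
          _ = Qᵀ * (Q * Q.adjugate) := by rw [mul_assoc]
          _ = Qᵀ := by rw [hQa, mul_one]
      rw [← adjugate_transpose, hQadj, transpose_transpose]
    have hcrossM : crossProduct (M.mulVec ![(1:ℝ),0,0]) (M.mulVec ![(0:ℝ),1,0])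
        = (α1 * β1) • ![0,0,1] := by
      funext i
      fin_cases i <;>
        simp [cross_apply, mulVec, dotProduct, Fin.sum_univ_three, hM, hEdef,
          Matrix.add_apply, Matrix.smul_apply, Matrix.sub_apply, vecMulVec_apply,
          Matrix.one_apply, he0, he1, he2, smul_eq_mul]
      linear_combination (α1 * β1 - β1 * β1) * hv₀'
    have hcrossF : crossProduct (fun i => F i 0) (fun i => F i 1)
        = (α1 * β1) • Q.mulVec ![0,0,1] := by
      rw [hcol0, hcol1, hFQM, ← mulVec_mulVec, ← mulVec_mulVec, cross_adj, hadj,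
        hcrossM, mulVec_smul]
    have hq3 : (Q.mulVec ![0,0,1]) ⬝ᵥ (Q.mulVec ![0,0,1]) = 1 := by
      have h22 := congrFun (congrFun hQ1 2) 2
      simp [mul_apply, transpose_apply, Fin.sum_univ_three, Matrix.one_apply] at h22
      simp [mulVec, dotProduct, Fin.sum_univ_three]
      linear_combination h22
    have hnrm2 : nrm3 (crossProduct (fun i => F i 0) (fun i => F i 1)) = α1 * β1 := by
      rw [hcrossF, nrm3, smul_dotProduct, dotProduct_smul, hq3, smul_eq_mul,
        smul_eq_mul, mul_one]
      rw [show α1 * β1 * (α1 * β1) = (α1 * β1) ^ 2 from by ring,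
        Real.sqrt_sq (mul_pos hα1pos hβ1pos).le]
    rw [hcol2, hFe3, hnrm2, hcrossF, smul_smul]
    have hcoef : l0 ^ ((1:ℝ)/4) * lf ^ (-(1:ℝ)/4) / (α1 * β1) * (α1 * β1) = β1 := by
      rw [div_mul_cancel₀ _ (mul_pos hα1pos hβ1pos).ne']
      rw [hβ1]; ring
    rw [hcoef]
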